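/- Let DG = (V, E) be a dynamic graph with node features X, and let M be a Global HopeDGN on DG whose functions AGG, UPDATE, f_1, and f_2 are all injective. Suppose the 2-DWL test on DG is initialized with a node-pair labeling l satisfying l((u, v)) = l((u', v')) if and only if [X_u || X_v] = [X_{u'} || X_{v'}] for all (u, v), (u', v') ∈ V², and uses an injective hash. Then at any time t and any iteration j ≥ 0, if the 2-DWL test assigns different colors to two node pairs s, s' ∈ V² (i.e., c^{(j)}_t(s) ≠ c^{(j)}_t(s')), then M outputs different temporal embeddings of these two node pairs (i.e., h^{(j)}_t(s) ≠ h^{(j)}_t(s')). -/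
import Mathlib


/-- Historical interaction sequence `A^{<t}_{u,v}`: the sorted list of all
timestamps `t' < t` with `(u,v,t') ∈ E` or `(v,u,t') ∈ E`. -/
noncomputable def hist {V : Type} [DecidableEq V] (E : Multiset (V × V × ℝ)) (t : ℝ)
    (u v : V) : List ℝ :=
  ((E.filter fun e => ((e.1 = u ∧ e.2.1 = v) ∨ (e.1 = v ∧ e.2.1 = u)) ∧ e.2.2 < t).map
    fun e => e.2.2).sort (· ≤ ·)

/-- Time-interval sequence `B^t_{u,v}`: obtained from `A^{<t}_{u,v}` by replacing
each timestamp `a` by `t - a`. -/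
noncomputable def Bseq {V : Type} [DecidableEq V] (E : Multiset (V × V × ℝ)) (t : ℝ)
    (u v : V) : List ℝ :=
  (hist E t u v).map fun a => t - a

/-- 2-DWL colors on node pairs at time `t`: `c⁰ = l` and
`c^{j+1}(v₁,v₂) = HASH (c^j(v₁,v₂), {{ (c^j(w,v₂), c^j(v₁,w), A^{<t}_{w,v₁}, A^{<t}_{w,v₂}) : w ∈ V }})`. -/
noncomputable def dwl2 {V : Type} [Fintype V] [DecidableEq V] {C : Type}
    (E : Multiset (V × V × ℝ)) (t : ℝ) (l : V × V → C)
    (hash : C × Multiset (C × C × List ℝ × List ℝ) → C) : ℕ → V × V → C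
  | 0 => l
  | j + 1 => fun s =>
      hash (dwl2 E t l hash j s,
        (Finset.univ : Finset V).val.map fun w =>
          (dwl2 E t l hash j (w, s.2), dwl2 E t l hash j (s.1, w),
           hist E t w s.1, hist E t w s.2))

/-- Global HopeDGN node-pair embeddings at time `t`:
`h⁰(u,v) = [X_u ‖ X_v]` and
`h^{l+1}(s) = UPDATE (h^l(s), AGG {{ ψ(s,w) : w ∈ V }})` with
`ψ((u,v),w) = [f₁([h^l(u,w) ‖ h^l(v,w)]) ‖ f₂([B^t_{u,w} ‖ B^t_{v,w}])]`. -/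
noncomputable def hope {V : Type} [Fintype V] [DecidableEq V] {dN d1 d2 dA : ℕ}
    (E : Multiset (V × V × ℝ)) (t : ℝ) (X : V → Fin dN → ℝ)
    (f1 : (Fin (dN + dN) → ℝ) × (Fin (dN + dN) → ℝ) → Fin d1 → ℝ)
    (f2 : List ℝ × List ℝ → Fin d2 → ℝ)
    (AGG : Multiset ((Fin d1 → ℝ) × (Fin d2 → ℝ)) → Fin dA → ℝ)
    (UPDATE : (Fin (dN + dN) → ℝ) × (Fin dA → ℝ) → Fin (dN + dN) → ℝ) :
    ℕ → V × V → Fin (dN + dN) → ℝ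
  | 0 => fun s => Fin.append (X s.1) (X s.2)
  | j + 1 => fun s =>
      UPDATE (hope E t X f1 f2 AGG UPDATE j s,
        AGG ((Finset.univ : Finset V).val.map fun w =>
          (f1 (hope E t X f1 f2 AGG UPDATE j (s.1, w),
               hope E t X f1 f2 AGG UPDATE j (s.2, w)),
           f2 (Bseq E t s.1 w, Bseq E t s.2 w))))

theorem hist_comm {V : Type} [DecidableEq V] (E : Multiset (V × V × ℝ)) (t : ℝ)
    (u v : V) : hist E t u v = hist E t v u := by
  unfold hist
  congr 1
  congr 1
  apply Multiset.filter_congr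
  intro e _
  tauto

/-- Proposition 5: a Global HopeDGN with injective `AGG`,
`UPDATE`, `f₁` and `f₂` is as powerful as the 2-DWL test (initialized with a
node-pair labeling consistent with the concatenated node features and run with an
injective hash): at any time `t` and iteration `j`, if the 2-DWL test assigns
different colors to two node pairs, then the HopeDGN outputs different temporal
embeddings for them. -/
theorem hope_as_powerful_as_dwl2 {V : Type} [Fintype V] [DecidableEq V]
    {C : Type} {dN d1 d2 dA : ℕ}
    (E : Multiset (V × V × ℝ))
    (X : V → Fin dN → ℝ)
    (l : V × V → C)
    (hl : ∀ p q : V × V,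
      l p = l q ↔ Fin.append (X p.1) (X p.2) = Fin.append (X q.1) (X q.2))
    (hash : C × Multiset (C × C × List ℝ × List ℝ) → C)
    (hash_inj : Function.Injective hash)
    (f1 : (Fin (dN + dN) → ℝ) × (Fin (dN + dN) → ℝ) → Fin d1 → ℝ)
    (f2 : List ℝ × List ℝ → Fin d2 → ℝ)
    (AGG : Multiset ((Fin d1 → ℝ) × (Fin d2 → ℝ)) → Fin dA → ℝ)
    (UPDATE : (Fin (dN + dN) → ℝ) × (Fin dA → ℝ) → Fin (dN + dN) → ℝ)
    (f1_inj : Function.Injective f1) (f2_inj : Function.Injective f2)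
    (AGG_inj : Function.Injective AGG) (UPDATE_inj : Function.Injective UPDATE) :
    ∀ (t : ℝ) (j : ℕ) (s s' : V × V),
      dwl2 E t l hash j s ≠ dwl2 E t l hash j s' →
      hope E t X f1 f2 AGG UPDATE j s ≠ hope E t X f1 f2 AGG UPDATE j s' := by
  intro t j s s' hne heq
  apply hne
  haveI : Nonempty V := ⟨s.1⟩
  clear hne
  suffices h : ∀ (j : ℕ) (p q : V × V),
      hope E t X f1 f2 AGG UPDATE j p = hope E t X f1 f2 AGG UPDATE j q →
      dwl2 E t l hash j p = dwl2 E t l hash j q ∧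
        hope E t X f1 f2 AGG UPDATE j p.swap = hope E t X f1 f2 AGG UPDATE j q.swap by
    exact (h j s s' heq).1
  clear heq s s' j
  intro j
  induction j with
  | zero =>
      intro p q h
      simp only [hope] at h ⊢
      have h1 : X p.1 = X q.1 := by
        funext i
        have := congrFun h (Fin.castAdd dN i)
        simpa [Fin.append_left] using this
      have h2 : X p.2 = X q.2 := by
        funext i
        have := congrFun h (Fin.natAdd dN i)
        rwa [Fin.append_right, Fin.append_right] at this
      constructor
      · exact (hl p q).mpr h
      · rw [Prod.swap, Prod.swap, h1, h2]
  | succ j ih =>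
      intro p q h
      simp only [hope] at h
      have h' := UPDATE_inj h
      have h1 : hope E t X f1 f2 AGG UPDATE j p = hope E t X f1 f2 AGG UPDATE j q :=
        congrArg Prod.fst h'
      have hM : ((Finset.univ : Finset V).val.map fun w =>
            (f1 (hope E t X f1 f2 AGG UPDATE j (p.1, w),
                 hope E t X f1 f2 AGG UPDATE j (p.2, w)),
             f2 (Bseq E t p.1 w, Bseq E t p.2 w))) =
          ((Finset.univ : Finset V).val.map fun w =>
            (f1 (hope E t X f1 f2 AGG UPDATE j (q.1, w),
                 hope E t X f1 f2 AGG UPDATE j (q.2, w)),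
             f2 (Bseq E t q.1 w, Bseq E t q.2 w))) :=
        AGG_inj (congrArg Prod.snd h')
      obtain ⟨hc, hs⟩ := ih p q h1
      have hBrec : ∀ (u w : V),
          (Bseq E t u w).map (fun a => t - a) = hist E t w u := by
        intro u w
        rw [← hist_comm]
        simp only [Bseq, List.map_map]
        rw [show ((fun a => t - a) ∘ fun a : ℝ => t - a) = id from funext fun a => by
          simp, List.map_id]
      -- key recovery functions
      set H := hope E t X f1 f2 AGG UPDATE with hH
      have hf1inv : ∀ x, Function.invFun f1 (f1 x) = x :=
        fun x => Function.leftInverse_invFun f1_inj x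
      have hf2inv : ∀ x, Function.invFun f2 (f2 x) = x :=
        fun x => Function.leftInverse_invFun f2_inj x
      have hHinv : ∀ x : V × V, H j (Function.invFun (H j) (H j x)) = H j x :=
        fun x => Function.invFun_eq ⟨x, rfl⟩
      -- Φ maps a ψ-value to the corresponding dwl tuple
      set Φ : (Fin d1 → ℝ) × (Fin d2 → ℝ) → C × C × List ℝ × List ℝ := fun r =>
        (dwl2 E t l hash j (Prod.swap (Function.invFun (H j) (Function.invFun f1 r.1).2)),
         dwl2 E t l hash j (Function.invFun (H j) (Function.invFun f1 r.1).1),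
         ((Function.invFun f2 r.2).1).map (fun a => t - a),
         ((Function.invFun f2 r.2).2).map (fun a => t - a)) with hΦ
      have keyΦ : ∀ (r : V × V) (w : V),
          Φ (f1 (H j (r.1, w), H j (r.2, w)), f2 (Bseq E t r.1 w, Bseq E t r.2 w)) =
            (dwl2 E t l hash j (w, r.2), dwl2 E t l hash j (r.1, w),
             hist E t w r.1, hist E t w r.2) := by
        intro r w
        simp only [hΦ, hf1inv, hf2inv, hBrec]
        have e2 := hHinv (r.2, w)
        obtain ⟨_, e2s⟩ := ih _ _ e2
        have := (ih _ _ e2s).1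
        rw [this]
        have e1 := hHinv (r.1, w)
        rw [(ih _ _ e1).1]
        rfl
      -- Ψ maps a ψ-value to the ψ-value of the swapped pair
      set Ψ : (Fin d1 → ℝ) × (Fin d2 → ℝ) → (Fin d1 → ℝ) × (Fin d2 → ℝ) := fun r =>
        (f1 ((Function.invFun f1 r.1).2, (Function.invFun f1 r.1).1),
         f2 ((Function.invFun f2 r.2).2, (Function.invFun f2 r.2).1)) with hΨ
      have keyΨ : ∀ (r : V × V) (w : V),
          Ψ (f1 (H j (r.1, w), H j (r.2, w)), f2 (Bseq E t r.1 w, Bseq E t r.2 w)) =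
            (f1 (H j (r.swap.1, w), H j (r.swap.2, w)),
             f2 (Bseq E t r.swap.1 w, Bseq E t r.swap.2 w)) := by
        intro r w
        simp only [hΨ, hf1inv, hf2inv]
        rfl
      constructor
      · simp only [dwl2]
        congr 1
        rw [hc]
        congr 1
        have lhs : ((Finset.univ : Finset V).val.map fun w =>
            (dwl2 E t l hash j (w, p.2), dwl2 E t l hash j (p.1, w),
             hist E t w p.1, hist E t w p.2)) =
            (((Finset.univ : Finset V).val.map fun w =>
              (f1 (H j (p.1, w), H j (p.2, w)),
               f2 (Bseq E t p.1 w, Bseq E t p.2 w))).map Φ) := by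
          rw [Multiset.map_map]
          exact Multiset.map_congr rfl (fun w _ => (keyΦ p w).symm)
        have rhs : ((Finset.univ : Finset V).val.map fun w =>
            (dwl2 E t l hash j (w, q.2), dwl2 E t l hash j (q.1, w),
             hist E t w q.1, hist E t w q.2)) =
            (((Finset.univ : Finset V).val.map fun w =>
              (f1 (H j (q.1, w), H j (q.2, w)),
               f2 (Bseq E t q.1 w, Bseq E t q.2 w))).map Φ) := by
          rw [Multiset.map_map]
          exact Multiset.map_congr rfl (fun w _ => (keyΦ q w).symm)
        rw [lhs, rhs, hM]
      · show UPDATE (H j p.swap, AGG ((Finset.univ : Finset V).val.map fun w =>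
              (f1 (H j (p.swap.1, w), H j (p.swap.2, w)),
               f2 (Bseq E t p.swap.1 w, Bseq E t p.swap.2 w)))) =
            UPDATE (H j q.swap, AGG ((Finset.univ : Finset V).val.map fun w =>
              (f1 (H j (q.swap.1, w), H j (q.swap.2, w)),
               f2 (Bseq E t q.swap.1 w, Bseq E t q.swap.2 w))))
        congr 1
        rw [hs]
        congr 1
        have lhs : ((Finset.univ : Finset V).val.map fun w =>
            (f1 (H j (p.swap.1, w), H j (p.swap.2, w)),
             f2 (Bseq E t p.swap.1 w, Bseq E t p.swap.2 w))) =
            (((Finset.univ : Finset V).val.map fun w =>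
              (f1 (H j (p.1, w), H j (p.2, w)),
               f2 (Bseq E t p.1 w, Bseq E t p.2 w))).map Ψ) := by
          rw [Multiset.map_map]
          exact Multiset.map_congr rfl (fun w _ => (keyΨ p w).symm)
        have rhs : ((Finset.univ : Finset V).val.map fun w =>
            (f1 (H j (q.swap.1, w), H j (q.swap.2, w)),
             f2 (Bseq E t q.swap.1 w, Bseq E t q.swap.2 w))) =
            (((Finset.univ : Finset V).val.map fun w =>
              (f1 (H j (q.1, w), H j (q.2, w)),
               f2 (Bseq E t q.1 w, Bseq E t q.2 w))).map Ψ) := by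
          rw [Multiset.map_map]
          exact Multiset.map_congr rfl (fun w _ => (keyΨ q w).symm)
        rw [lhs, rhs, hM]
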